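/- Let V be a multiplicative unitary of multiplicity 1 on a finite-dimensional Hilbert space H, and let f, g be pre-subgroups. The following are equivalent: (i) V(f⊗g) = f⊗g; (ii) H^g ⊆ H^f; (iii) H_f ⊆ H_g. Moreover, the relation g ≺ f defined by these conditions is a partial order on the set of pre-subgroups, with greatest element e and least element ê. -/

import Mathlib

open scoped InnerProductSpace ComplexOrder

noncomputable section

namespace MU

variable {ι : Type*} [Fintype ι] [DecidableEq ι]

/-- The elementary tensor `f ⊗ g` of two vectors, in the model
`H ⊗ H = EuclideanSpace ℂ (ι × ι)`. -/
def tens (f g : EuclideanSpace ℂ ι) : EuclideanSpace ℂ (ι × ι) :=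
  WithLp.toLp 2 (fun p => f p.1 * g p.2)

/-- `g ↦ f ⊗ g` as a linear map. -/
def tensL (f : EuclideanSpace ℂ ι) :
    EuclideanSpace ℂ ι →ₗ[ℂ] EuclideanSpace ℂ (ι × ι) where
  toFun g := tens f g
  map_add' x y := WithLp.ofLp_injective 2 <| funext fun p => by
    show f p.1 * (x + y) p.2 = f p.1 * x p.2 + f p.1 * y p.2
    rw [PiLp.add_apply]; ring
  map_smul' c x := WithLp.ofLp_injective 2 <| funext fun p => by
    show f p.1 * (c • x) p.2 = (c • (tens f x : EuclideanSpace ℂ (ι × ι))) p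
    rw [PiLp.smul_apply, PiLp.smul_apply, smul_eq_mul, smul_eq_mul]
    show f p.1 * (c * x p.2) = c * (f p.1 * x p.2)
    ring

/-- `f ↦ f ⊗ g` as a linear map. -/
def tensR (g : EuclideanSpace ℂ ι) :
    EuclideanSpace ℂ ι →ₗ[ℂ] EuclideanSpace ℂ (ι × ι) where
  toFun f := tens f g
  map_add' x y := WithLp.ofLp_injective 2 <| funext fun p => by
    show (x + y) p.1 * g p.2 = x p.1 * g p.2 + y p.1 * g p.2
    rw [PiLp.add_apply]; ring
  map_smul' c x := WithLp.ofLp_injective 2 <| funext fun p => by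
    show (c • x) p.1 * g p.2 = (c • (tens x g : EuclideanSpace ℂ (ι × ι))) p
    rw [PiLp.smul_apply, PiLp.smul_apply, smul_eq_mul, smul_eq_mul]
    show (c * x p.1) * g p.2 = c * (x p.1 * g p.2)
    ring

/-- Action of a matrix on a Euclidean space vector. -/
def appM {κ : Type*} [Fintype κ] (M : Matrix κ κ ℂ) (v : EuclideanSpace ℂ κ) :
    EuclideanSpace ℂ κ :=
  WithLp.toLp 2 (fun i => ∑ j, M i j * v j)

/-- Action of a matrix as a linear map on the Euclidean space. -/
def mact {κ : Type*} [Fintype κ] (M : Matrix κ κ ℂ) :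
    EuclideanSpace ℂ κ →ₗ[ℂ] EuclideanSpace ℂ κ where
  toFun := appM M
  map_add' x y := WithLp.ofLp_injective 2 <| funext fun i => by
    show ∑ j, M i j * (x + y) j = (appM M x + appM M y) i
    rw [PiLp.add_apply]
    show ∑ j, M i j * (x + y) j = (∑ j, M i j * x j) + ∑ j, M i j * y j
    rw [← Finset.sum_add_distrib]
    refine Finset.sum_congr rfl fun j _ => ?_
    rw [PiLp.add_apply]; ring
  map_smul' c x := WithLp.ofLp_injective 2 <| funext fun i => by
    show ∑ j, M i j * (c • x) j = (c • appM M x) i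
    rw [PiLp.smul_apply, smul_eq_mul]
    show ∑ j, M i j * (c • x) j = c * ∑ j, M i j * x j
    rw [Finset.mul_sum]
    refine Finset.sum_congr rfl fun j _ => ?_
    rw [PiLp.smul_apply, smul_eq_mul]; ring

/-- The leg `V₁₂` on `H ⊗ H ⊗ H`. -/
def leg12 (V : Matrix (ι × ι) (ι × ι) ℂ) : Matrix (ι × ι × ι) (ι × ι × ι) ℂ :=
  fun p q => V (p.1, p.2.1) (q.1, q.2.1) * (if p.2.2 = q.2.2 then 1 else 0)

/-- The leg `V₁₃` on `H ⊗ H ⊗ H`. -/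
def leg13 (V : Matrix (ι × ι) (ι × ι) ℂ) : Matrix (ι × ι × ι) (ι × ι × ι) ℂ :=
  fun p q => V (p.1, p.2.2) (q.1, q.2.2) * (if p.2.1 = q.2.1 then 1 else 0)

/-- The leg `V₂₃` on `H ⊗ H ⊗ H`. -/
def leg23 (V : Matrix (ι × ι) (ι × ι) ℂ) : Matrix (ι × ι × ι) (ι × ι × ι) ℂ :=
  fun p q => V (p.2.1, p.2.2) (q.2.1, q.2.2) * (if p.1 = q.1 then 1 else 0)

/-- The pentagon equation `V₁₂ V₁₃ V₂₃ = V₂₃ V₁₂`. -/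
def Pentagon (V : Matrix (ι × ι) (ι × ι) ℂ) : Prop :=
  leg12 V * leg13 V * leg23 V = leg23 V * leg12 V

/-- `V` is a multiplicative unitary: a unitary satisfying the pentagon equation. -/
def IsMU (V : Matrix (ι × ι) (ι × ι) ℂ) : Prop :=
  V * V.conjTranspose = 1 ∧ V.conjTranspose * V = 1 ∧ Pentagon V

/-- `ξ` is a fixed vector for `V`. -/
def Fixed (V : Matrix (ι × ι) (ι × ι) ℂ) (ξ : EuclideanSpace ℂ ι) : Prop :=
  ∀ η, mact V (tens ξ η) = tens ξ η

/-- `ξ` is a cofixed vector for `V`. -/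
def Cofixed (V : Matrix (ι × ι) (ι × ι) ℂ) (ξ : EuclideanSpace ℂ ι) : Prop :=
  ∀ η, mact V (tens η ξ) = tens η ξ

/-- `V` has multiplicity 1, with fixed unit vector `e` and cofixed unit vector `eHat`. -/
def Mult1 (V : Matrix (ι × ι) (ι × ι) ℂ) (e eHat : EuclideanSpace ℂ ι) : Prop :=
  ‖e‖ = 1 ∧ ‖eHat‖ = 1 ∧ Fixed V e ∧ Cofixed V eHat ∧
    (∀ ξ, Fixed V ξ → ∃ c : ℂ, ξ = c • e) ∧
    (∀ ξ, Cofixed V ξ → ∃ c : ℂ, ξ = c • eHat)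

/-- A pre-subgroup of `V` (with fixed vector `e`): a unit vector `f` with
`⟨f,e⟩ > 0` and `V(f⊗f) = f⊗f`. -/
def IsPreSubgroup (V : Matrix (ι × ι) (ι × ι) ℂ) (e f : EuclideanSpace ℂ ι) : Prop :=
  ‖f‖ = 1 ∧ 0 < ⟪f, e⟫_ℂ ∧ mact V (tens f f) = tens f f

/-- The subspace `H^f = {η : V(f⊗η) = f⊗η}`. -/
def subUp (V : Matrix (ι × ι) (ι × ι) ℂ) (f : EuclideanSpace ℂ ι) :
    Submodule ℂ (EuclideanSpace ℂ ι) :=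
  LinearMap.ker ((mact V).comp (tensL f) - tensL f)

/-- The subspace `H_f = {η : V(η⊗f) = η⊗f}`. -/
def subDown (V : Matrix (ι × ι) (ι × ι) ℂ) (f : EuclideanSpace ℂ ι) :
    Submodule ℂ (EuclideanSpace ℂ ι) :=
  LinearMap.ker ((mact V).comp (tensR f) - tensR f)

/-- The slice `L(ω_{ξ,η}) = (ω_{ξ,η} ⊗ id)(V)`. -/
def Lslice (V : Matrix (ι × ι) (ι × ι) ℂ) (ξ η : EuclideanSpace ℂ ι) : Matrix ι ι ℂ :=
  fun a b => ∑ x, ∑ y, (starRingEnd ℂ) (ξ x) * η y * V (x, a) (y, b)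

/-- The slice `ρ(ω_{ξ,η}) = (id ⊗ ω_{ξ,η})(V)`. -/
def Rslice (V : Matrix (ι × ι) (ι × ι) ℂ) (ξ η : EuclideanSpace ℂ ι) : Matrix ι ι ℂ :=
  fun a b => ∑ x, ∑ y, (starRingEnd ℂ) (ξ x) * η y * V (a, x) (b, y)

/-- The slice `L(ω) = (ω ⊗ id)(V)` of a general linear functional `ω` on `L(H)`. -/
def LslF (V : Matrix (ι × ι) (ι × ι) ℂ) (ω : Matrix ι ι ℂ →ₗ[ℂ] ℂ) : Matrix ι ι ℂ :=
  fun a b => ω (fun x y => V (x, a) (y, b))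

/-- A state on `L(H)`: a unital positive linear functional. -/
def IsState (ω : Matrix ι ι ℂ →ₗ[ℂ] ℂ) : Prop :=
  ω 1 = 1 ∧ ∀ M : Matrix ι ι ℂ, M.PosSemidef → ∃ r : ℝ, 0 ≤ r ∧ ω M = r

/-!
Transitivity of `V(f ⊗ g) = f ⊗ g`, and with it the equivalence of (i), (ii) and (iii), is the
pentagon equation applied to `a ⊗ b ⊗ c`: when `V₁₂` and `V₂₃` fix it, so does `V₁₃`.

For antisymmetry, write the slices `L(ω_f) = (ω_f ⊗ id)(V)` and `ρ(ω_e) = (id ⊗ ω_e)(V)` as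
compressions `A† V A` of `V` by the isometries `A η = f ⊗ η` and `A η = η ⊗ e`. They are
contractions, and the pentagon equation makes them idempotent, so they are orthogonal
projections; `ρ(ω_e)` projects onto `ℂ e` by multiplicity one. This yields
`L(ω_f) e = ⟪f, e⟫ f`, so every `g ≺ f` satisfies `⟪g, e⟫ = ⟪f, e⟫ ⟪g, f⟫`. If also `f ≺ g`,
positivity of `⟪f, e⟫` and `⟪g, e⟫` forces `⟪f, g⟫ = 1`, i.e. `f = g`.
-/

section HilbertSpace

variable {𝕜 E F : Type*} [RCLike 𝕜]
  [NormedAddCommGroup E] [InnerProductSpace 𝕜 E] [FiniteDimensional 𝕜 E]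
  [NormedAddCommGroup F] [InnerProductSpace 𝕜 F] [FiniteDimensional 𝕜 F]

open LinearMap RCLike

theorem _root_.LinearMap.norm_adjoint_apply_le {A : E →ₗ[𝕜] F}
    (hA : ∀ x, ‖A x‖ ≤ ‖x‖) (y : F) : ‖A.adjoint y‖ ≤ ‖y‖ := by
  have h : ‖A.adjoint y‖ ^ 2 ≤ ‖A.adjoint y‖ * ‖y‖ :=
    calc ‖A.adjoint y‖ ^ 2 = re ⟪A (A.adjoint y), y⟫_𝕜 := by
          rw [← adjoint_inner_right, ← inner_self_eq_norm_sq (𝕜 := 𝕜)]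
      _ ≤ ‖A (A.adjoint y)‖ * ‖y‖ := (re_le_norm _).trans (norm_inner_le_norm _ _)
      _ ≤ ‖A.adjoint y‖ * ‖y‖ := by gcongr; exact hA _
  nlinarith [norm_nonneg (A.adjoint y), norm_nonneg y]

theorem _root_.LinearMap.adjoint_apply_eq_of_apply_eq {T : E →ₗ[𝕜] E}
    (hT : ∀ x, ‖T x‖ ≤ ‖x‖) {x : E} (hx : T x = x) : T.adjoint x = x := by
  have hre : re ⟪T.adjoint x, x⟫_𝕜 = ‖x‖ ^ 2 := by
    rw [adjoint_inner_left, hx, inner_self_eq_norm_sq]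
  have h : ‖T.adjoint x - x‖ ^ 2 ≤ 0 := by
    rw [@norm_sub_sq 𝕜, hre]
    nlinarith [norm_adjoint_apply_le hT x, norm_nonneg (T.adjoint x)]
  exact sub_eq_zero.mp (norm_le_zero_iff.mp (by nlinarith [norm_nonneg (T.adjoint x - x)]))

theorem _root_.LinearMap.isSymmetric_of_isIdempotentElem {T : E →ₗ[𝕜] E}
    (hT : ∀ x, ‖T x‖ ≤ ‖x‖) (hidem : IsIdempotentElem T) : T.IsSymmetric := by
  have key : ∀ u v, ⟪T u, v⟫_𝕜 = ⟪T u, T v⟫_𝕜 := fun u v => by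
    rw [← adjoint_inner_left, adjoint_apply_eq_of_apply_eq hT (LinearMap.ext_iff.mp hidem u)]
  intro u v
  rw [key, ← inner_conj_symm u, key v u, inner_conj_symm]

section Compression

variable {A : E →ₗ[𝕜] F} (hA : ∀ x y, ⟪A x, A y⟫_𝕜 = ⟪x, y⟫_𝕜)
include hA

theorem _root_.LinearMap.adjoint_apply_apply_of_inner_map_map (x : E) : A.adjoint (A x) = x :=
  ext_inner_left 𝕜 fun y => by rw [adjoint_inner_right, hA]

variable {U : F →ₗ[𝕜] F} (hU : ∀ x, ‖U x‖ = ‖x‖)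
include hU

theorem _root_.LinearMap.norm_adjoint_comp_apply_le (x : E) :
    ‖A.adjoint (U (A x))‖ ≤ ‖x‖ :=
  calc ‖A.adjoint (U (A x))‖ ≤ ‖U (A x)‖ :=
        norm_adjoint_apply_le (fun x => ((A.isometryOfInner hA).norm_map x).le) _
    _ = ‖x‖ := by rw [hU]; exact (A.isometryOfInner hA).norm_map x

theorem _root_.LinearMap.apply_eq_of_adjoint_comp_apply_eq {x : E}
    (hx : A.adjoint (U (A x)) = x) : U (A x) = A x := by
  have hre : re ⟪U (A x), A x⟫_𝕜 = ‖x‖ ^ 2 := by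
    rw [← inner_conj_symm, conj_re, ← adjoint_inner_right, hx, inner_self_eq_norm_sq]
  have h : ‖U (A x) - A x‖ ^ 2 = 0 := by
    have hAx : ‖A x‖ = ‖x‖ := (A.isometryOfInner hA).norm_map x
    rw [@norm_sub_sq 𝕜, hre, hU, hAx]
    ring
  exact sub_eq_zero.mp (norm_eq_zero.mp (pow_eq_zero_iff two_ne_zero |>.mp h))

end Compression

end HilbertSpace

theorem eq_one_of_eq_mul_conj {α β c : ℂ} (hα : 0 < α) (hβ : 0 < β)
    (h1 : β = α * starRingEnd ℂ c) (h2 : α = β * c) : c = 1 := by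
  have hreal : ∀ z : ℂ, 0 < z → starRingEnd ℂ z = z := fun z hz =>
    (IsSelfAdjoint.of_nonneg hz.le).star_eq
  have hc : c = α / β := by rw [h2, mul_div_cancel_left₀ c hβ.ne']
  have hsq : (β - α) * (β + α) = 0 := by
    rw [hc, map_div₀, hreal α hα, hreal β hβ] at h1
    field_simp at h1
    linear_combination h1
  have hαβ : α = β := by
    rcases mul_eq_zero.mp hsq with h | h
    · exact (sub_eq_zero.mp h).symm
    · exact absurd h (add_pos hβ hα).ne'
  rw [hc, hαβ, div_self hβ.ne']

open scoped Matrix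

section MatrixAction

variable {κ : Type*} [Fintype κ]

theorem inner_eq_sum (x y : EuclideanSpace ℂ κ) :
    ⟪x, y⟫_ℂ = ∑ i, starRingEnd ℂ (x i) * y i := by
  simp [PiLp.inner_apply, RCLike.inner_apply, mul_comm]

theorem mact_apply (M : Matrix κ κ ℂ) (v : EuclideanSpace ℂ κ) (i : κ) :
    mact M v i = ∑ j, M i j * v j := rfl

variable [DecidableEq κ]

theorem mact_eq_toEuclideanLin (M : Matrix κ κ ℂ) : mact M = Matrix.toEuclideanLin M := rfl

theorem mact_mul (M N : Matrix κ κ ℂ) (v : EuclideanSpace ℂ κ) :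
    mact (M * N) v = mact M (mact N v) := by
  simp only [mact_eq_toEuclideanLin, Matrix.toLpLin_mul 2 2 2, LinearMap.comp_apply]

theorem mact_one (v : EuclideanSpace ℂ κ) : mact (1 : Matrix κ κ ℂ) v = v := by
  rw [mact_eq_toEuclideanLin, Matrix.toLpLin_one, LinearMap.id_apply]

theorem inner_mact (M : Matrix κ κ ℂ) (x y : EuclideanSpace ℂ κ) :
    ⟪x, mact M y⟫_ℂ = ⟪mact Mᴴ x, y⟫_ℂ := by
  rw [mact_eq_toEuclideanLin, mact_eq_toEuclideanLin,
    Matrix.toEuclideanLin_conjTranspose_eq_adjoint, LinearMap.adjoint_inner_left]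

variable {U : Matrix κ κ ℂ} (hU : Uᴴ * U = 1)
include hU

theorem inner_mact_mact (x y : EuclideanSpace ℂ κ) :
    ⟪mact U x, mact U y⟫_ℂ = ⟪x, y⟫_ℂ := by
  rw [inner_mact, ← mact_mul, hU, mact_one]

theorem norm_mact (x : EuclideanSpace ℂ κ) : ‖mact U x‖ = ‖x‖ :=
  ((mact U).isometryOfInner (inner_mact_mact hU)).norm_map x

theorem mact_injective : Function.Injective (mact U) := fun x y h => by
  simpa only [← mact_mul, hU, mact_one] using congrArg (mact Uᴴ) h

end MatrixAction

section Tensors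

variable {ι : Type*}

theorem tens_apply (a b : EuclideanSpace ℂ ι) (p : ι × ι) : tens a b p = a p.1 * b p.2 := rfl

theorem tensL_apply (a b : EuclideanSpace ℂ ι) : tensL a b = tens a b := rfl

theorem tensR_apply (a b : EuclideanSpace ℂ ι) : tensR b a = tens a b := rfl

-- The tensor in `H ⊗ H ⊗ H` with `X ∈ H ⊗ H` on the legs `i, j` and the vector on the third
-- leg, matching `legij`.
def tens12 (X : EuclideanSpace ℂ (ι × ι)) (c : EuclideanSpace ℂ ι) :
    EuclideanSpace ℂ (ι × ι × ι) :=
  WithLp.toLp 2 fun p => X (p.1, p.2.1) * c p.2.2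

def tens13 (X : EuclideanSpace ℂ (ι × ι)) (b : EuclideanSpace ℂ ι) :
    EuclideanSpace ℂ (ι × ι × ι) :=
  WithLp.toLp 2 fun p => X (p.1, p.2.2) * b p.2.1

def tens23 (a : EuclideanSpace ℂ ι) (X : EuclideanSpace ℂ (ι × ι)) :
    EuclideanSpace ℂ (ι × ι × ι) :=
  WithLp.toLp 2 fun p => a p.1 * X p.2

theorem tens12_tens (a b c : EuclideanSpace ℂ ι) :
    tens12 (tens a b) c = tens23 a (tens b c) := by
  ext p; simp only [tens12, tens23, tens_apply, mul_assoc]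

theorem tens13_tens (a b c : EuclideanSpace ℂ ι) :
    tens13 (tens a c) b = tens23 a (tens b c) := by
  ext p; simp only [tens13, tens23, tens_apply]; ring

theorem tens13_injective {b : EuclideanSpace ℂ ι} (hb : b ≠ 0) :
    Function.Injective fun X => tens13 X b := by
  intro X Y h
  obtain ⟨y, hy⟩ : ∃ y, b y ≠ 0 := by
    by_contra! h0
    exact hb (PiLp.ext h0)
  ext p
  exact mul_right_cancel₀ hy
    (congrArg (fun Z : EuclideanSpace ℂ (ι × ι × ι) => Z (p.1, y, p.2)) h)

variable [Fintype ι]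

theorem inner_tens (a b c d : EuclideanSpace ℂ ι) :
    ⟪tens a b, tens c d⟫_ℂ = ⟪a, c⟫_ℂ * ⟪b, d⟫_ℂ := by
  simp only [inner_eq_sum, tens_apply, Fintype.sum_prod_type, Finset.sum_mul_sum, map_mul]
  exact Finset.sum_congr rfl fun _ _ => Finset.sum_congr rfl fun _ _ => by ring

theorem inner_tens12 (X Y : EuclideanSpace ℂ (ι × ι)) (c d : EuclideanSpace ℂ ι) :
    ⟪tens12 X c, tens12 Y d⟫_ℂ = ⟪X, Y⟫_ℂ * ⟪c, d⟫_ℂ := by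
  simp only [inner_eq_sum, tens12, Fintype.sum_prod_type, map_mul, Finset.sum_mul]
  simp only [Finset.mul_sum]
  exact Finset.sum_congr rfl fun _ _ => Finset.sum_congr rfl fun _ _ =>
    Finset.sum_congr rfl fun _ _ => by ring

theorem inner_tens23 (a b : EuclideanSpace ℂ ι) (X Y : EuclideanSpace ℂ (ι × ι)) :
    ⟪tens23 a X, tens23 b Y⟫_ℂ = ⟪a, b⟫_ℂ * ⟪X, Y⟫_ℂ := by
  simp only [inner_eq_sum, tens23, Fintype.sum_prod_type, map_mul, Finset.sum_mul]
  simp only [Finset.mul_sum]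
  exact Finset.sum_congr rfl fun _ _ => Finset.sum_congr rfl fun _ _ =>
    Finset.sum_congr rfl fun _ _ => by ring

theorem inner_tensL_tensL {f : EuclideanSpace ℂ ι} (hf : ‖f‖ = 1)
    (x y : EuclideanSpace ℂ ι) : ⟪tensL f x, tensL f y⟫_ℂ = ⟪x, y⟫_ℂ := by
  rw [tensL_apply, tensL_apply, inner_tens, inner_self_eq_one_of_norm_eq_one hf, one_mul]

theorem inner_tensR_tensR {e : EuclideanSpace ℂ ι} (he : ‖e‖ = 1)
    (x y : EuclideanSpace ℂ ι) : ⟪tensR e x, tensR e y⟫_ℂ = ⟪x, y⟫_ℂ := by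
  rw [tensR_apply, tensR_apply, inner_tens, inner_self_eq_one_of_norm_eq_one he, mul_one]

theorem adjoint_tensL_apply (f : EuclideanSpace ℂ ι) (X : EuclideanSpace ℂ (ι × ι)) (c : ι) :
    (tensL f).adjoint X c = ∑ x, starRingEnd ℂ (f x) * X (x, c) := by
  classical
  rw [← one_mul ((tensL f).adjoint X c), ← map_one (starRingEnd ℂ),
    ← EuclideanSpace.inner_single_left, LinearMap.adjoint_inner_right, tensL_apply, inner_eq_sum,
    Fintype.sum_prod_type]
  simp [tens_apply, apply_ite (starRingEnd ℂ), ite_mul]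

theorem adjoint_tensR_apply (e : EuclideanSpace ℂ ι) (X : EuclideanSpace ℂ (ι × ι)) (a : ι) :
    (tensR e).adjoint X a = ∑ x, starRingEnd ℂ (e x) * X (a, x) := by
  classical
  rw [← one_mul ((tensR e).adjoint X a), ← map_one (starRingEnd ℂ),
    ← EuclideanSpace.inner_single_left, LinearMap.adjoint_inner_right, tensR_apply, inner_eq_sum,
    Fintype.sum_prod_type]
  simp [tens_apply, apply_ite (starRingEnd ℂ), ite_mul]

theorem inner_tens_adjoint_tensL (f a : EuclideanSpace ℂ ι) (X Y : EuclideanSpace ℂ (ι × ι)) :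
    ⟪Y, tens a ((tensL f).adjoint X)⟫_ℂ = ⟪tens13 Y f, tens23 a X⟫_ℂ := by
  simp only [inner_eq_sum, tens_apply, adjoint_tensL_apply, tens13, tens23, Fintype.sum_prod_type,
    Finset.mul_sum, map_mul]
  refine Finset.sum_congr rfl fun _ _ => ?_
  rw [Finset.sum_comm]
  exact Finset.sum_congr rfl fun _ _ => Finset.sum_congr rfl fun _ _ => by ring

theorem inner_tens_adjoint_tensR (e a : EuclideanSpace ℂ ι) (X Y : EuclideanSpace ℂ (ι × ι)) :
    ⟪Y, tens ((tensR e).adjoint X) a⟫_ℂ = ⟪tens12 Y e, tens13 X a⟫_ℂ := by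
  simp only [inner_eq_sum, tens_apply, adjoint_tensR_apply, tens12, tens13, Fintype.sum_prod_type,
    Finset.mul_sum, Finset.sum_mul, map_mul]
  exact Finset.sum_congr rfl fun _ _ => Finset.sum_congr rfl fun _ _ =>
    Finset.sum_congr rfl fun _ _ => by ring

end Tensors

section Legs

variable {ι : Type*} [DecidableEq ι]

theorem conjTranspose_leg12 (M : Matrix (ι × ι) (ι × ι) ℂ) : (leg12 M)ᴴ = leg12 Mᴴ := by
  ext p q; simp [leg12, Matrix.conjTranspose_apply, eq_comm, apply_ite (starRingEnd ℂ)]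

theorem conjTranspose_leg13 (M : Matrix (ι × ι) (ι × ι) ℂ) : (leg13 M)ᴴ = leg13 Mᴴ := by
  ext p q; simp [leg13, Matrix.conjTranspose_apply, eq_comm, apply_ite (starRingEnd ℂ)]

theorem conjTranspose_leg23 (M : Matrix (ι × ι) (ι × ι) ℂ) : (leg23 M)ᴴ = leg23 Mᴴ := by
  ext p q; simp [leg23, Matrix.conjTranspose_apply, eq_comm, apply_ite (starRingEnd ℂ)]

theorem leg12_one : leg12 (1 : Matrix (ι × ι) (ι × ι) ℂ) = 1 := by
  ext p q; simp only [leg12, Matrix.one_apply, Prod.ext_iff]; split_ifs <;> simp_all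

theorem leg23_one : leg23 (1 : Matrix (ι × ι) (ι × ι) ℂ) = 1 := by
  ext p q; simp only [leg23, Matrix.one_apply, Prod.ext_iff]; split_ifs <;> simp_all

variable [Fintype ι]

theorem leg12_mul (M N : Matrix (ι × ι) (ι × ι) ℂ) : leg12 M * leg12 N = leg12 (M * N) := by
  ext p q; simp [leg12, Matrix.mul_apply, Fintype.sum_prod_type]

theorem leg23_mul (M N : Matrix (ι × ι) (ι × ι) ℂ) : leg23 M * leg23 N = leg23 (M * N) := by
  ext p q; simp [leg23, Matrix.mul_apply, Fintype.sum_prod_type]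

theorem mact_leg12_tens12 (M : Matrix (ι × ι) (ι × ι) ℂ) (X : EuclideanSpace ℂ (ι × ι))
    (c : EuclideanSpace ℂ ι) : mact (leg12 M) (tens12 X c) = tens12 (mact M X) c := by
  ext p
  simp [mact_apply, leg12, tens12, Fintype.sum_prod_type, Finset.sum_mul, mul_assoc]

theorem mact_leg13_tens13 (M : Matrix (ι × ι) (ι × ι) ℂ) (X : EuclideanSpace ℂ (ι × ι))
    (b : EuclideanSpace ℂ ι) : mact (leg13 M) (tens13 X b) = tens13 (mact M X) b := by
  ext p
  simp [mact_apply, leg13, tens13, Fintype.sum_prod_type, Finset.sum_mul, mul_assoc]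

theorem mact_leg23_tens23 (M : Matrix (ι × ι) (ι × ι) ℂ) (a : EuclideanSpace ℂ ι)
    (X : EuclideanSpace ℂ (ι × ι)) : mact (leg23 M) (tens23 a X) = tens23 a (mact M X) := by
  ext p
  simp [mact_apply, leg23, tens23, Fintype.sum_prod_type, Finset.mul_sum, mul_left_comm]

end Legs

section Slices

variable {ι : Type*} [Fintype ι] {V : Matrix (ι × ι) (ι × ι) ℂ}

/-- `sliceL V f` and `sliceR V e` are the slices `(ω_f ⊗ id)(V)` and `(id ⊗ ω_e)(V)` by vector
states (`mact (Lslice V f f)` and `mact (Rslice V e e)`), written as compressions of `V` by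
`η ↦ f ⊗ η` and `η ↦ η ⊗ e`. -/
def sliceL (V : Matrix (ι × ι) (ι × ι) ℂ) (f : EuclideanSpace ℂ ι) :
    EuclideanSpace ℂ ι →ₗ[ℂ] EuclideanSpace ℂ ι :=
  (tensL f).adjoint ∘ₗ mact V ∘ₗ tensL f

def sliceR (V : Matrix (ι × ι) (ι × ι) ℂ) (e : EuclideanSpace ℂ ι) :
    EuclideanSpace ℂ ι →ₗ[ℂ] EuclideanSpace ℂ ι :=
  (tensR e).adjoint ∘ₗ mact V ∘ₗ tensR e

theorem sliceL_apply (f v : EuclideanSpace ℂ ι) :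
    sliceL V f v = (tensL f).adjoint (mact V (tens f v)) := rfl

theorem sliceR_apply (e v : EuclideanSpace ℂ ι) :
    sliceR V e v = (tensR e).adjoint (mact V (tens v e)) := rfl

theorem sliceL_apply_of_mact_tens {f g : EuclideanSpace ℂ ι} (hf : ‖f‖ = 1)
    (hfg : mact V (tens f g) = tens f g) : sliceL V f g = g := by
  rw [sliceL_apply, hfg, ← tensL_apply]
  exact LinearMap.adjoint_apply_apply_of_inner_map_map (inner_tensL_tensL hf) g

theorem sliceR_apply_of_mact_tens {e g : EuclideanSpace ℂ ι} (he : ‖e‖ = 1)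
    (hge : mact V (tens g e) = tens g e) : sliceR V e g = g := by
  rw [sliceR_apply, hge, ← tensR_apply]
  exact LinearMap.adjoint_apply_apply_of_inner_map_map (inner_tensR_tensR he) g

theorem IsPreSubgroup.ne_zero {e f : EuclideanSpace ℂ ι} (hf : IsPreSubgroup V e f) : f ≠ 0 :=
  ne_zero_of_norm_ne_zero (by simp [hf.1])

theorem mem_subUp {f η : EuclideanSpace ℂ ι} :
    η ∈ subUp V f ↔ mact V (tens f η) = tens f η :=
  sub_eq_zero

theorem mem_subDown {f η : EuclideanSpace ℂ ι} :
    η ∈ subDown V f ↔ mact V (tens η f) = tens η f :=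
  sub_eq_zero

end Slices

section MultiplicativeUnitary

variable {ι : Type*} [Fintype ι] [DecidableEq ι] {V : Matrix (ι × ι) (ι × ι) ℂ}

theorem IsMU.conjTranspose_leg12_mul (hV : IsMU V) : (leg12 V)ᴴ * leg12 V = 1 := by
  rw [conjTranspose_leg12, leg12_mul, hV.2.1, leg12_one]

theorem IsMU.conjTranspose_leg23_mul (hV : IsMU V) : (leg23 V)ᴴ * leg23 V = 1 := by
  rw [conjTranspose_leg23, leg23_mul, hV.2.1, leg23_one]

theorem Pentagon.mact_apply (hV : Pentagon V) (x : EuclideanSpace ℂ (ι × ι × ι)) :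
    mact (leg12 V) (mact (leg13 V) (mact (leg23 V) x)) = mact (leg23 V) (mact (leg12 V) x) := by
  rw [← mact_mul, ← mact_mul, ← mact_mul, hV]

theorem IsMU.mact_tens_trans (hV : IsMU V) {a b c : EuclideanSpace ℂ ι} (hb : b ≠ 0)
    (hab : mact V (tens a b) = tens a b) (hbc : mact V (tens b c) = tens b c) :
    mact V (tens a c) = tens a c := by
  have h12 : mact (leg12 V) (tens23 a (tens b c)) = tens23 a (tens b c) := by
    rw [← tens12_tens, mact_leg12_tens12, hab]
  have h23 : mact (leg23 V) (tens23 a (tens b c)) = tens23 a (tens b c) := by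
    rw [mact_leg23_tens23, hbc]
  have h13 : mact (leg13 V) (tens23 a (tens b c)) = tens23 a (tens b c) := by
    apply mact_injective hV.conjTranspose_leg12_mul
    conv_lhs => rw [← h23]
    rw [hV.2.2.mact_apply, h12, h23]
  apply tens13_injective hb
  change tens13 (mact V (tens a c)) b = tens13 (tens a c) b
  rw [← mact_leg13_tens13, tens13_tens, h13]

theorem IsMU.norm_sliceL_le (hV : IsMU V) {f : EuclideanSpace ℂ ι} (hf : ‖f‖ = 1)
    (v : EuclideanSpace ℂ ι) : ‖sliceL V f v‖ ≤ ‖v‖ :=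
  LinearMap.norm_adjoint_comp_apply_le (inner_tensL_tensL hf) (norm_mact hV.2.1) v

theorem IsMU.norm_sliceR_le (hV : IsMU V) {e : EuclideanSpace ℂ ι} (he : ‖e‖ = 1)
    (v : EuclideanSpace ℂ ι) : ‖sliceR V e v‖ ≤ ‖v‖ :=
  LinearMap.norm_adjoint_comp_apply_le (inner_tensR_tensR he) (norm_mact hV.2.1) v

theorem IsMU.isIdempotentElem_sliceL (hV : IsMU V) {f : EuclideanSpace ℂ ι} (hf : ‖f‖ = 1)
    (hff : mact V (tens f f) = tens f f) : IsIdempotentElem (sliceL V f) := by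
  refine LinearMap.ext fun v => ext_inner_left ℂ fun w => ?_
  have h12 : ∀ u, mact (leg12 V) (tens23 f (tens f u)) = tens23 f (tens f u) := fun u => by
    rw [← tens12_tens, mact_leg12_tens12, hff]
  calc ⟪w, sliceL V f (sliceL V f v)⟫_ℂ
      = ⟪tens13 (mact Vᴴ (tens f w)) f, tens23 f (mact V (tens f v))⟫_ℂ := by
        rw [sliceL_apply, LinearMap.adjoint_inner_right, tensL_apply, inner_mact,
          sliceL_apply, inner_tens_adjoint_tensL]
    _ = ⟪tens23 f (tens f w), mact (leg13 V) (mact (leg23 V) (tens23 f (tens f v)))⟫_ℂ := by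
        rw [← mact_leg13_tens13, ← conjTranspose_leg13, ← inner_mact, tens13_tens,
          mact_leg23_tens23]
    _ = ⟪tens23 f (tens f w), mact (leg23 V) (tens23 f (tens f v))⟫_ℂ := by
        rw [← inner_mact_mact hV.conjTranspose_leg12_mul, hV.2.2.mact_apply, h12, h12]
    _ = ⟪w, sliceL V f v⟫_ℂ := by
        rw [mact_leg23_tens23, inner_tens23, inner_self_eq_one_of_norm_eq_one hf, one_mul,
          sliceL_apply, LinearMap.adjoint_inner_right, tensL_apply]

theorem IsMU.isIdempotentElem_sliceR (hV : IsMU V) {e : EuclideanSpace ℂ ι} (he : ‖e‖ = 1)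
    (hee : mact V (tens e e) = tens e e) : IsIdempotentElem (sliceR V e) := by
  refine LinearMap.ext fun v => ext_inner_left ℂ fun w => ?_
  have h23 : ∀ u, mact (leg23 V) (tens23 u (tens e e)) = tens23 u (tens e e) := fun u => by
    rw [mact_leg23_tens23, hee]
  calc ⟪w, sliceR V e (sliceR V e v)⟫_ℂ
      = ⟪tens12 (mact Vᴴ (tens w e)) e, tens13 (mact V (tens v e)) e⟫_ℂ := by
        rw [sliceR_apply, LinearMap.adjoint_inner_right, tensR_apply, inner_mact,
          sliceR_apply, inner_tens_adjoint_tensR]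
    _ = ⟪tens23 w (tens e e), mact (leg12 V) (mact (leg13 V) (tens23 v (tens e e)))⟫_ℂ := by
        rw [← mact_leg12_tens12, ← conjTranspose_leg12, ← inner_mact, tens12_tens,
          ← mact_leg13_tens13, tens13_tens]
    _ = ⟪tens23 w (tens e e), mact (leg12 V) (tens23 v (tens e e))⟫_ℂ := by
        conv_lhs => rw [← h23 v, hV.2.2.mact_apply, ← h23 w,
          inner_mact_mact hV.conjTranspose_leg23_mul]
    _ = ⟪w, sliceR V e v⟫_ℂ := by
        rw [← tens12_tens, ← tens12_tens, mact_leg12_tens12, inner_tens12,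
          inner_self_eq_one_of_norm_eq_one he, mul_one, sliceR_apply,
          LinearMap.adjoint_inner_right, tensR_apply]

theorem IsMU.isSymmetric_sliceL (hV : IsMU V) {f : EuclideanSpace ℂ ι} (hf : ‖f‖ = 1)
    (hff : mact V (tens f f) = tens f f) : (sliceL V f).IsSymmetric :=
  LinearMap.isSymmetric_of_isIdempotentElem (hV.norm_sliceL_le hf)
    (hV.isIdempotentElem_sliceL hf hff)

theorem IsMU.isSymmetric_sliceR (hV : IsMU V) {e : EuclideanSpace ℂ ι} (he : ‖e‖ = 1)
    (hee : mact V (tens e e) = tens e e) : (sliceR V e).IsSymmetric :=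
  LinearMap.isSymmetric_of_isIdempotentElem (hV.norm_sliceR_le he)
    (hV.isIdempotentElem_sliceR he hee)

/-- A vector fixed by `sliceR V e` is fixed by `V` (equality case of the compression), hence a
multiple of `e`; so the symmetric idempotent `sliceR V e` is the projection onto `ℂ e`. -/
theorem IsMU.sliceR_eq_inner_smul (hV : IsMU V) {e : EuclideanSpace ℂ ι} (he : ‖e‖ = 1)
    (hfix : Fixed V e) (huniq : ∀ ξ, Fixed V ξ → ∃ c : ℂ, ξ = c • e)
    (v : EuclideanSpace ℂ ι) : sliceR V e v = ⟪e, v⟫_ℂ • e := by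
  have hee : mact V (tens e e) = tens e e := hfix e
  set u := sliceR V e v
  have hu : sliceR V e u = u := LinearMap.ext_iff.mp (hV.isIdempotentElem_sliceR he hee) v
  have hue : mact V (tens u e) = tens u e :=
    LinearMap.apply_eq_of_adjoint_comp_apply_eq (inner_tensR_tensR he) (norm_mact hV.2.1) hu
  obtain ⟨c, hc⟩ := huniq u fun η =>
    hV.mact_tens_trans (ne_zero_of_norm_ne_zero (by simp [he])) hue (hfix η)
  have hc' : c = ⟪e, v⟫_ℂ :=
    calc c = ⟪e, u⟫_ℂ := by
          rw [hc, inner_smul_right, inner_self_eq_one_of_norm_eq_one he, mul_one]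
      _ = ⟪sliceR V e e, v⟫_ℂ := (hV.isSymmetric_sliceR he hee e v).symm
      _ = ⟪e, v⟫_ℂ := by rw [sliceR_apply_of_mact_tens he hee]
  rw [hc, hc']

theorem IsMU.sliceL_apply_fixed (hV : IsMU V) {e f : EuclideanSpace ℂ ι} (he : ‖e‖ = 1)
    (hfix : Fixed V e) (huniq : ∀ ξ, Fixed V ξ → ∃ c : ℂ, ξ = c • e) (hf : ‖f‖ = 1)
    (hff : mact V (tens f f) = tens f f) : sliceL V f e = ⟪f, e⟫_ℂ • f := by
  have hP := hV.isSymmetric_sliceL hf hff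
  have hfp : ⟪f, sliceL V f e⟫_ℂ = ⟪f, e⟫_ℂ := by
    rw [← hP, sliceL_apply_of_mact_tens hf hff]
  -- both sides are `⟪f ⊗ e, V (f ⊗ e)⟫`, read through `sliceL V f` and `sliceR V e`
  have hep : ⟪e, sliceL V f e⟫_ℂ = ⟪e, f⟫_ℂ * ⟪f, e⟫_ℂ := by
    rw [sliceL_apply, LinearMap.adjoint_inner_right, tensL_apply, ← tensR_apply,
      ← LinearMap.adjoint_inner_right, tensR_apply, ← sliceR_apply,
      hV.sliceR_eq_inner_smul he hfix huniq, inner_smul_right]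
  have hpp : ⟪sliceL V f e, sliceL V f e⟫_ℂ = ⟪e, sliceL V f e⟫_ℂ := by
    rw [hP, ← Module.End.mul_apply, hV.isIdempotentElem_sliceL hf hff]
  rw [← sub_eq_zero, ← inner_self_eq_zero (𝕜 := ℂ)]
  simp only [inner_sub_left, inner_sub_right, inner_smul_left, inner_smul_right, hpp, hep, hfp,
    inner_self_eq_one_of_norm_eq_one hf]
  rw [← inner_conj_symm (sliceL V f e), hfp, inner_conj_symm]
  ring

theorem IsMU.inner_eq_mul_of_mact_tens (hV : IsMU V) {e f g : EuclideanSpace ℂ ι}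
    (he : ‖e‖ = 1) (hfix : Fixed V e) (huniq : ∀ ξ, Fixed V ξ → ∃ c : ℂ, ξ = c • e)
    (hf : ‖f‖ = 1) (hff : mact V (tens f f) = tens f f) (hfg : mact V (tens f g) = tens f g) :
    ⟪g, e⟫_ℂ = ⟪f, e⟫_ℂ * ⟪g, f⟫_ℂ :=
  calc ⟪g, e⟫_ℂ = ⟪sliceL V f g, e⟫_ℂ := by rw [sliceL_apply_of_mact_tens hf hfg]
    _ = ⟪g, sliceL V f e⟫_ℂ := hV.isSymmetric_sliceL hf hff g e
    _ = ⟪f, e⟫_ℂ * ⟪g, f⟫_ℂ := by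
        rw [hV.sliceL_apply_fixed he hfix huniq hf hff, inner_smul_right]

theorem IsMU.eq_of_mact_tens_of_mact_tens (hV : IsMU V) {e f g : EuclideanSpace ℂ ι}
    (he : ‖e‖ = 1) (hfix : Fixed V e) (huniq : ∀ ξ, Fixed V ξ → ∃ c : ℂ, ξ = c • e)
    (hf : IsPreSubgroup V e f) (hg : IsPreSubgroup V e g)
    (hfg : mact V (tens f g) = tens f g) (hgf : mact V (tens g f) = tens g f) : f = g := by
  have h1 := hV.inner_eq_mul_of_mact_tens he hfix huniq hf.1 hf.2.2 hfg
  have h2 := hV.inner_eq_mul_of_mact_tens he hfix huniq hg.1 hg.2.2 hgf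
  rw [← inner_conj_symm g f] at h1
  exact (inner_eq_one_iff_of_norm_eq_one hf.1 hg.1).mp (eq_one_of_eq_mul_conj hf.2.1 hg.2.1 h1 h2)

end MultiplicativeUnitary

theorem presubgroup_order_general {ι : Type*} [Fintype ι] [DecidableEq ι]
    (V : Matrix (ι × ι) (ι × ι) ℂ) (hV : IsMU V)
    (e eHat : EuclideanSpace ℂ ι) (hm : Mult1 V e eHat)
    (f g : EuclideanSpace ℂ ι) (hf : IsPreSubgroup V e f) (hg : IsPreSubgroup V e g) :
    ((mact V (tens f g) = tens f g ↔ subUp V g ≤ subUp V f) ∧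
     (mact V (tens f g) = tens f g ↔ subDown V f ≤ subDown V g)) ∧
    (∀ f', IsPreSubgroup V e f' → mact V (tens f' f') = tens f' f') ∧
    (∀ f' g' h', IsPreSubgroup V e f' → IsPreSubgroup V e g' → IsPreSubgroup V e h' →
      mact V (tens f' g') = tens f' g' → mact V (tens g' h') = tens g' h' →
      mact V (tens f' h') = tens f' h') ∧
    (∀ f' g', IsPreSubgroup V e f' → IsPreSubgroup V e g' →
      mact V (tens f' g') = tens f' g' → mact V (tens g' f') = tens g' f' → f' = g') ∧
    (∀ f', IsPreSubgroup V e f' → mact V (tens e f') = tens e f') ∧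
    (∀ f', IsPreSubgroup V e f' → mact V (tens f' eHat) = tens f' eHat) := by
  obtain ⟨he, -, hfix, hcofix, huniq, -⟩ := hm
  refine ⟨⟨⟨fun hfg => ?_, fun h => ?_⟩, ⟨fun hfg => ?_, fun h => ?_⟩⟩,
    fun _ hk => hk.2.2,
    fun _ _ _ _ hg' _ => hV.mact_tens_trans hg'.ne_zero,
    fun _ _ hf' hg' => hV.eq_of_mact_tens_of_mact_tens he hfix huniq hf' hg',
    fun k _ => hfix k, fun k _ => hcofix k⟩
  · exact fun η hη => mem_subUp.mpr (hV.mact_tens_trans hg.ne_zero hfg (mem_subUp.mp hη))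
  · exact mem_subUp.mp (h (mem_subUp.mpr hg.2.2))
  · exact fun η hη => mem_subDown.mpr (hV.mact_tens_trans hf.ne_zero (mem_subDown.mp hη) hfg)
  · exact mem_subDown.mp (h (mem_subDown.mpr hf.2.2))

/-- the equivalent characterizations of `g ≺ f` and the fact that
`≺` is a partial order on pre-subgroups with greatest element `e` and least
element `ê`. -/
theorem presubgroup_order {ι : Type*} [Fintype ι] [DecidableEq ι] [Nonempty ι]
    (V : Matrix (ι × ι) (ι × ι) ℂ) (hV : IsMU V)
    (e eHat : EuclideanSpace ℂ ι) (hm : Mult1 V e eHat)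
    (f g : EuclideanSpace ℂ ι) (hf : IsPreSubgroup V e f) (hg : IsPreSubgroup V e g) :
    ((mact V (tens f g) = tens f g ↔ subUp V g ≤ subUp V f) ∧
     (mact V (tens f g) = tens f g ↔ subDown V f ≤ subDown V g)) ∧
    (∀ f', IsPreSubgroup V e f' → mact V (tens f' f') = tens f' f') ∧
    (∀ f' g' h', IsPreSubgroup V e f' → IsPreSubgroup V e g' → IsPreSubgroup V e h' →
      mact V (tens f' g') = tens f' g' → mact V (tens g' h') = tens g' h' →
      mact V (tens f' h') = tens f' h') ∧
    (∀ f' g', IsPreSubgroup V e f' → IsPreSubgroup V e g' →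
      mact V (tens f' g') = tens f' g' → mact V (tens g' f') = tens g' f' → f' = g') ∧
    (∀ f', IsPreSubgroup V e f' → mact V (tens e f') = tens e f') ∧
    (∀ f', IsPreSubgroup V e f' → mact V (tens f' eHat) = tens f' eHat) :=
  presubgroup_order_general V hV e eHat hm f g hf hg

end MU
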